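/- arXiv:2402.12076 — 3 statements merged into one kernel-verified Lean document; each statement's English description precedes it below -/
import Mathlib

section
/- Let {alpha_j}_{j=0}^{N-1} be nonnegative functions on a finite data set {x_s}_{s=0}^{S-1}, and let A be the S x N collocation matrix A_{sj} = alpha_j(x_s). Suppose each column of A is nonzero and sum_j alpha_j(x_s) <= 1 for all s. Define the iteration C^{(q)} = C^{(q-1)} + D^{-1} A^T (X - A C^{(q-1)}), where D is the diagonal matrix with entries D_{jj} = sum_s A_{sj}. Then the eigenvalues of D^{-1} A^T A are real and lie in the interval [0, 1]. -/
/-!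
The eigenproblem for `D⁻¹AᵀA` is the generalized eigenproblem `AᵀA v = μ D v` of a pencil of
Hermitian matrices with `0 ⪯ AᵀA ⪯ D` and `D ≻ 0`, so every eigenvalue is a Rayleigh quotient
`μ = ‖Av‖² / v*Dv ∈ [0, 1]`. The bound `‖Av‖² ≤ v*Dv` holds row by row: the entries of a row of `A`
are nonnegative weights of total mass at most one, so `|∑ⱼ Aᵢⱼ vⱼ|² ≤ ∑ⱼ Aᵢⱼ |vⱼ|²` by
Cauchy–Schwarz, and summing over `i` gives `∑ⱼ Dⱼⱼ |vⱼ|²`.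
-/

open Matrix
open scoped ComplexOrder

theorem RingHom.map_nonsing_inv {n K L : Type*} [Fintype n] [DecidableEq n] [Field K] [Field L]
    (f : K →+* L) (M : Matrix n n K) : M⁻¹.map f = (M.map f)⁻¹ := by
  simp only [inv_def, Matrix.map_smul' _ _ _ (map_mul f), ← RingHom.mapMatrix_apply,
    RingHom.map_adjugate, ← RingHom.map_det, Ring.inverse_eq_inv', map_inv₀]

theorem norm_sum_smul_sq_le {ι E : Type*} [SeminormedAddCommGroup E] [NormedSpace ℝ E]
    (s : Finset ι) {a : ι → ℝ} (v : ι → E) (ha : ∀ i ∈ s, 0 ≤ a i) (ha1 : ∑ i ∈ s, a i ≤ 1) :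
    ‖∑ i ∈ s, a i • v i‖ ^ 2 ≤ ∑ i ∈ s, a i * ‖v i‖ ^ 2 := by
  have hweighted : 0 ≤ ∑ i ∈ s, a i * ‖v i‖ ^ 2 :=
    Finset.sum_nonneg fun i hi => mul_nonneg (ha i hi) (sq_nonneg _)
  have hnorm : ‖∑ i ∈ s, a i • v i‖ ≤ ∑ i ∈ s, a i * ‖v i‖ :=
    (norm_sum_le _ _).trans_eq <| Finset.sum_congr rfl fun i hi => by
      rw [norm_smul, Real.norm_of_nonneg (ha i hi)]
  calc ‖∑ i ∈ s, a i • v i‖ ^ 2 ≤ (∑ i ∈ s, a i * ‖v i‖) ^ 2 := by gcongr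
    _ ≤ (∑ i ∈ s, a i) * ∑ i ∈ s, a i * ‖v i‖ ^ 2 :=
      Finset.sum_sq_le_sum_mul_sum_of_sq_le_mul s ha
        (fun i hi => mul_nonneg (ha i hi) (sq_nonneg _)) fun i _ => le_of_eq (by ring)
    _ ≤ ∑ i ∈ s, a i * ‖v i‖ ^ 2 := mul_le_of_le_one_left hweighted ha1

namespace Matrix

variable {m n 𝕜 : Type*} [Fintype m] [Fintype n] [RCLike 𝕜]

theorem star_dotProduct_self_eq (w : n → 𝕜) : star w ⬝ᵥ w = ((∑ i, ‖w i‖ ^ 2 : ℝ) : 𝕜) := by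
  simp [dotProduct, RCLike.conj_mul]

theorem star_dotProduct_diagonal_mulVec [DecidableEq n] (d : n → ℝ) (v : n → 𝕜) :
    star v ⬝ᵥ (diagonal (fun j => (d j : 𝕜)) *ᵥ v) = ((∑ j, d j * ‖v j‖ ^ 2 : ℝ) : 𝕜) := by
  simp [dotProduct, mulVec_diagonal, mul_left_comm _ (d _ : 𝕜), RCLike.conj_mul]

omit [Fintype m] in
theorem map_mulVec_eq_sum_smul (A : Matrix m n ℝ) (v : n → 𝕜) (i : m) :
    (A.map (algebraMap ℝ 𝕜) *ᵥ v) i = ∑ j, A i j • v j := by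
  simp [mulVec, dotProduct, Algebra.smul_def]

omit [Fintype n] in
theorem map_transpose_mul_self (A : Matrix m n ℝ) :
    (Aᵀ * A).map (algebraMap ℝ 𝕜) = (A.map (algebraMap ℝ 𝕜))ᴴ * A.map (algebraMap ℝ 𝕜) := by
  rw [Matrix.map_mul, ← conjTranspose_eq_transpose_of_trivial,
    conjTranspose_map _ fun x => (RCLike.conj_ofReal x).symm]

theorem posSemidef_map_diagonal_colSum_sub_transpose_mul_self [DecidableEq n] (A : Matrix m n ℝ)
    (hA : ∀ i j, 0 ≤ A i j) (hrow : ∀ i, ∑ j, A i j ≤ 1) :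
    ((diagonal (fun j => ∑ i, A i j) - Aᵀ * A).map (algebraMap ℝ 𝕜)).PosSemidef := by
  set Ac := A.map (algebraMap ℝ 𝕜)
  rw [Matrix.map_sub _ (map_sub _), diagonal_map (map_zero _), map_transpose_mul_self]
  refine .of_dotProduct_mulVec_nonneg ?_ fun v => ?_
  · exact (isHermitian_diagonal_of_self_adjoint _ <| funext fun j => RCLike.conj_ofReal _).sub
      (isHermitian_conjTranspose_mul_self Ac)
  have hgramForm : star v ⬝ᵥ (Acᴴ * Ac) *ᵥ v = star (Ac *ᵥ v) ⬝ᵥ (Ac *ᵥ v) := by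
    rw [← mulVec_mulVec, dotProduct_mulVec, ← star_mulVec]
  have hforms : ∑ i, ‖(Ac *ᵥ v) i‖ ^ 2 ≤ ∑ j, (∑ i, A i j) * ‖v j‖ ^ 2 := calc
    ∑ i, ‖(Ac *ᵥ v) i‖ ^ 2 ≤ ∑ i, ∑ j, A i j * ‖v j‖ ^ 2 := Finset.sum_le_sum fun i _ => by
      rw [map_mulVec_eq_sum_smul]
      exact norm_sum_smul_sq_le _ _ (fun j _ => hA i j) (hrow i)
    _ = ∑ j, (∑ i, A i j) * ‖v j‖ ^ 2 := by simp only [Finset.sum_mul]; exact Finset.sum_comm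
  rw [sub_mulVec, dotProduct_sub, hgramForm, star_dotProduct_self_eq,
    star_dotProduct_diagonal_mulVec, ← RCLike.ofReal_sub, RCLike.ofReal_nonneg, sub_nonneg]
  exact hforms

theorem eigenvalue_inv_mul_mem_Icc [DecidableEq n] {P M : Matrix n n 𝕜} (hP : P.PosDef)
    (hM : M.PosSemidef) (hPM : (P - M).PosSemidef) {μ : 𝕜}
    (hμ : Module.End.HasEigenvalue (toLin' (P⁻¹ * M)) μ) : μ ∈ Set.Icc 0 1 := by
  obtain ⟨v, hv⟩ := hμ.exists_hasEigenvector
  have hMv : M *ᵥ v = μ • (P *ᵥ v) := by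
    have hdet : IsUnit P.det := (isUnit_iff_isUnit_det P).mp hP.isUnit
    simpa [mulVec_mulVec, ← Matrix.mul_assoc, mul_nonsing_inv _ hdet, mulVec_smul] using
      congrArg (P *ᵥ ·) hv.apply_eq_smul
  have hq : 0 < star v ⬝ᵥ (P *ᵥ v) := hP.dotProduct_mulVec_pos hv.2
  have hp : star v ⬝ᵥ (M *ᵥ v) = μ * star v ⬝ᵥ (P *ᵥ v) := by
    rw [hMv, dotProduct_smul, smul_eq_mul]
  have hpq : star v ⬝ᵥ (M *ᵥ v) ≤ star v ⬝ᵥ (P *ᵥ v) := by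
    simpa [sub_mulVec, dotProduct_sub] using hPM.dotProduct_mulVec_nonneg v
  rw [eq_div_of_mul_eq hq.ne' hp.symm]
  exact ⟨div_nonneg (hM.dotProduct_mulVec_nonneg v) hq.le, (div_le_one₀ hq).mpr hpq⟩

end Matrix

/-- for the LSPIA iteration matrix, with `A` nonnegative, having no
zero column and row sums at most 1, and `D = diag(colSums)`, every (complex)
eigenvalue of `D⁻¹ Aᵀ A` is real and lies in `[0,1]`. -/
theorem lspia_eigenvalues_real_in_unit_interval (S N : ℕ)
    (A : Matrix (Fin S) (Fin N) ℝ)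
    (hnonneg : ∀ s j, 0 ≤ A s j)
    (hcol : ∀ j, ∃ s, A s j ≠ 0)
    (hrow : ∀ s, (∑ j, A s j) ≤ 1)
    (D : Matrix (Fin N) (Fin N) ℝ)
    (hD : D = Matrix.diagonal (fun j => ∑ s, A s j)) :
    ∀ μ : ℂ,
      Module.End.HasEigenvalue
        (Matrix.toLin' ((D⁻¹ * Aᵀ * A).map (algebraMap ℝ ℂ))) μ →
      μ.im = 0 ∧ 0 ≤ μ.re ∧ μ.re ≤ 1 := by
  subst hD
  intro μ hμ
  have hcolSum : ∀ j, 0 < ∑ s, A s j := fun j => by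
    obtain ⟨s, hs⟩ := hcol j
    exact Finset.sum_pos' (fun s _ => hnonneg s j)
      ⟨s, Finset.mem_univ s, (hnonneg s j).lt_of_ne' hs⟩
  have hP : ((diagonal fun j => ∑ s, A s j).map (algebraMap ℝ ℂ)).PosDef := by
    rw [diagonal_map (map_zero _)]
    exact .diagonal fun j => RCLike.ofReal_pos.mpr (hcolSum j)
  have hM : ((Aᵀ * A).map (algebraMap ℝ ℂ)).PosSemidef := by
    rw [map_transpose_mul_self]
    exact posSemidef_conjTranspose_mul_self _
  have hPM := posSemidef_map_diagonal_colSum_sub_transpose_mul_self (𝕜 := ℂ) A hnonneg hrow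
  rw [Matrix.map_sub _ (map_sub _)] at hPM
  rw [Matrix.mul_assoc, Matrix.map_mul, RingHom.map_nonsing_inv] at hμ
  obtain ⟨hμ0, hμ1⟩ := eigenvalue_inv_mul_mem_Icc hP hM hPM hμ
  rw [Complex.le_def] at hμ0 hμ1
  exact ⟨hμ0.2.symm, hμ0.1, hμ1.1⟩
end

section
/- With the setup of the LSPIA iteration C^{(q)} = C^{(q-1)} + D^{-1} A^T (X - A C^{(q-1)}), if all eigenvalues of D^{-1} A^T A lie in (0,1], then the iteration converges, and its limit C* satisfies the normal equations A^T A C* = A^T X; i.e., C* is a least-squares solution of A C = X. -/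
/-! If `C*` solves the normal equations, the LSPIA step multiplies the error `C⁽q⁾ - C*` by
`B = 1 - D⁻¹ Aᵀ A`, so `C⁽q⁾ - C* = Bᵠ (C⁽⁰⁾ - C*)`. The eigenvalues of `B` are `1 - μ` with
`μ ∈ (0, 1]`, so the spectral radius of `B` is `< 1` and Gelfand's formula gives `Bᵠ → 0`. -/

open Matrix Filter Topology

theorem tendsto_pow_atTop_nhds_zero_of_spectralRadius_lt_one {A : Type*} [NormedRing A]
    [NormedAlgebra ℂ A] [CompleteSpace A] {a : A} (ha : spectralRadius ℂ a < 1) :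
    Tendsto (a ^ ·) atTop (𝓝 0) := by
  obtain ⟨s, hρs, hs1⟩ := ENNReal.lt_iff_exists_nnreal_btwn.mp ha
  have hbound : ∀ᶠ n : ℕ in atTop, ‖a ^ n‖ ≤ (s : ℝ) ^ n := by
    filter_upwards [(spectrum.pow_norm_pow_one_div_tendsto_nhds_spectralRadius a).eventually_lt_const
      hρs, eventually_ne_atTop 0] with n hn hn0
    rw [ENNReal.ofReal_lt_iff_lt_toReal (by positivity) ENNReal.coe_ne_top, one_div] at hn
    calc ‖a ^ n‖ = (‖a ^ n‖ ^ (n : ℝ)⁻¹) ^ n :=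
          (Real.rpow_inv_natCast_pow (norm_nonneg _) hn0).symm
      _ ≤ s ^ n := pow_le_pow_left₀ (by positivity) hn.le n
  exact squeeze_zero_norm' hbound
    (tendsto_pow_atTop_nhds_zero_of_lt_one s.2 (by exact_mod_cast hs1))

namespace Matrix

variable {m n : Type*} [Fintype n] [DecidableEq n]

section Spectrum

-- Any algebra norm would do; it only serves to make Gelfand's formula available.
attribute [local instance] Matrix.linftyOpNormedRing Matrix.linftyOpNormedAlgebra

theorem tendsto_pow_atTop_nhds_zero_of_forall_spectrum_norm_lt_one {T : Matrix n n ℝ}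
    (hT : ∀ z ∈ spectrum ℂ (T.map (algebraMap ℝ ℂ)), ‖z‖ < 1) :
    Tendsto (T ^ ·) atTop (𝓝 0) := by
  set Tc := T.map (algebraMap ℝ ℂ)
  have hρ : spectralRadius ℂ Tc < 1 := by
    rcases (spectrum ℂ Tc).eq_empty_or_nonempty with h | h
    · simp [spectralRadius, h]
    · exact_mod_cast spectrum.spectralRadius_lt_of_forall_lt_of_nonempty h
        (r := 1) fun z hz => by exact_mod_cast hT z hz
  have hre : Tendsto (fun q => (Tc ^ q).map Complex.re) atTop
      (𝓝 ((0 : Matrix n n ℂ).map Complex.re)) :=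
    ((continuous_id.matrix_map Complex.continuous_re).tendsto 0).comp
      (tendsto_pow_atTop_nhds_zero_of_spectralRadius_lt_one hρ)
  convert hre using 1
  · ext q : 1
    rw [← Matrix.map_pow T (algebraMap ℝ ℂ)]
    ext; simp
  · simp

theorem norm_lt_one_of_mem_spectrum_one_sub {M : Matrix n n ℂ}
    (hM : ∀ μ : ℂ, Module.End.HasEigenvalue (toLin' M) μ → μ.im = 0 ∧ 0 < μ.re ∧ μ.re ≤ 1)
    {z : ℂ} (hz : z ∈ spectrum ℂ (1 - M)) : ‖z‖ < 1 := by
  have h1z : 1 - z ∈ spectrum ℂ M := by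
    rw [← map_one (algebraMap ℂ (Matrix n n ℂ)), ← spectrum.singleton_sub_eq] at hz
    obtain ⟨_, rfl, w, hw, rfl⟩ := hz
    simpa using hw
  obtain ⟨him, hpos, hle⟩ :=
    hM _ (Module.End.hasEigenvalue_iff_mem_spectrum.mpr (by rwa [spectrum_toLin']))
  have hz_real : z = ((1 - (1 - z).re : ℝ) : ℂ) :=
    Complex.ext (by simp) (by simp at him ⊢; linarith)
  rw [hz_real, Complex.norm_real, Real.norm_eq_abs, abs_lt]
  constructor <;> linarith

end Spectrum

theorem lspia_sub_eq_pow_mulVec [Fintype m] {R : Type*} [CommRing R] {P : Matrix n m R}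
    {A : Matrix m n R} {X : m → R} {c : n → R} (hc : P *ᵥ (X - A *ᵥ c) = 0) {x : ℕ → n → R}
    (hx : ∀ q, x (q + 1) = x q + P *ᵥ (X - A *ᵥ x q)) (q : ℕ) :
    x q - c = (1 - P * A) ^ q *ᵥ (x 0 - c) := by
  induction q with
  | zero => simp
  | succ q ih =>
    rw [pow_succ', ← mulVec_mulVec, ← ih, hx, sub_mulVec, one_mulVec, ← mulVec_mulVec]
    rw [mulVec_sub, sub_eq_zero] at hc
    rw [mulVec_sub, mulVec_sub, mulVec_sub, hc]
    abel

theorem tendsto_lspia_of_tendsto_pow [Fintype m] {P : Matrix n m ℝ} {A : Matrix m n ℝ}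
    {X : m → ℝ} {c : n → ℝ} (hc : P *ᵥ (X - A *ᵥ c) = 0)
    (hpow : Tendsto ((1 - P * A) ^ ·) atTop (𝓝 0)) {x : ℕ → n → ℝ}
    (hx : ∀ q, x (q + 1) = x q + P *ᵥ (X - A *ᵥ x q)) : Tendsto x atTop (𝓝 c) := by
  have herr : Tendsto (fun q => (1 - P * A) ^ q *ᵥ (x 0 - c)) atTop (𝓝 0) := by
    simpa [Function.comp_def] using
      ((continuous_id.matrix_mulVec continuous_const).tendsto 0).comp hpow
  simpa [← lspia_sub_eq_pow_mulVec hc hx] using herr.const_add c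

end Matrix

theorem lspia_converges_to_least_squares_general (S N : ℕ)
    (A : Matrix (Fin S) (Fin N) ℝ) (X : Fin S → ℝ)
    (hrank : IsUnit (Aᵀ * A))
    (D : Matrix (Fin N) (Fin N) ℝ)
    (heig : ∀ μ : ℂ,
      Module.End.HasEigenvalue
        (Matrix.toLin' ((D⁻¹ * Aᵀ * A).map (algebraMap ℝ ℂ))) μ →
      μ.im = 0 ∧ 0 < μ.re ∧ μ.re ≤ 1)
    (Cseq : ℕ → (Fin N → ℝ))
    (hstep : ∀ q : ℕ,
      Cseq (q + 1) = Cseq q + (D⁻¹ * Aᵀ).mulVec (X - A.mulVec (Cseq q))) :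
    ∃ Cstar : Fin N → ℝ,
      Filter.Tendsto Cseq Filter.atTop (nhds Cstar) ∧
      (Aᵀ * A).mulVec Cstar = Aᵀ.mulVec X := by
  obtain ⟨Cstar, hnormal⟩ := mulVec_surjective_iff_isUnit.mpr hrank (Aᵀ *ᵥ X)
  have hfixed : (D⁻¹ * Aᵀ) *ᵥ (X - A *ᵥ Cstar) = 0 := by
    rw [← mulVec_mulVec, mulVec_sub, mulVec_mulVec, hnormal, sub_self, mulVec_zero]
  have hcontract : Tendsto ((1 - D⁻¹ * Aᵀ * A) ^ ·) atTop (𝓝 0) := by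
    refine tendsto_pow_atTop_nhds_zero_of_forall_spectrum_norm_lt_one fun z hz => ?_
    refine norm_lt_one_of_mem_spectrum_one_sub heig ?_
    rwa [← RingHom.mapMatrix_apply, map_sub, map_one] at hz
  exact ⟨Cstar, tendsto_lspia_of_tendsto_pow hfixed hcontract hstep, hnormal⟩

/-- convergence of the LSPIA iteration
`C⁽q⁾ = C⁽q⁻¹⁾ + D⁻¹ Aᵀ (X - A C⁽q⁻¹⁾)`. If `A` has full column rank
(`Aᵀ A` invertible), the diagonal entries of `D` are positive, and all
(complex) eigenvalues of `D⁻¹ Aᵀ A` lie in `(0,1]`, then the iterates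
converge and the limit satisfies the normal equations `Aᵀ A C* = Aᵀ X`. -/
theorem lspia_converges_to_least_squares (S N : ℕ)
    (A : Matrix (Fin S) (Fin N) ℝ) (X : Fin S → ℝ) (C0 : Fin N → ℝ)
    (hrank : IsUnit (Aᵀ * A))
    (D : Matrix (Fin N) (Fin N) ℝ)
    (hD : D = Matrix.diagonal (fun j => ∑ s, A s j))
    (hDpos : ∀ j, 0 < ∑ s, A s j)
    (heig : ∀ μ : ℂ,
      Module.End.HasEigenvalue
        (Matrix.toLin' ((D⁻¹ * Aᵀ * A).map (algebraMap ℝ ℂ))) μ →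
      μ.im = 0 ∧ 0 < μ.re ∧ μ.re ≤ 1)
    (Cseq : ℕ → (Fin N → ℝ))
    (hinit : Cseq 0 = C0)
    (hstep : ∀ q : ℕ,
      Cseq (q + 1) = Cseq q + (D⁻¹ * Aᵀ).mulVec (X - A.mulVec (Cseq q))) :
    ∃ Cstar : Fin N → ℝ,
      Filter.Tendsto Cseq Filter.atTop (nhds Cstar) ∧
      (Aᵀ * A).mulVec Cstar = Aᵀ.mulVec X :=
  lspia_converges_to_least_squares_general S N A X hrank D heig Cseq hstep
end

section
/- Let A be an S x N matrix with nonnegative entries, no zero column, and row sums at most 1 (sum_j A_{sj} <= 1 for all s). Let D = diag(d_j) with d_j = sum_s A_{sj}. Then for every vector v in R^N, v^T A^T A v <= v^T D v; equivalently, the spectral radius of D^{-1} A^T A is at most 1. -/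
open Matrix

lemma row_cs (n : ℕ) (a v : Fin n → ℝ) (ha : ∀ j, 0 ≤ a j) (hs : (∑ j, a j) ≤ 1) :
    (∑ j, a j * v j) ^ 2 ≤ ∑ j, a j * v j ^ 2 := by
  have key : (∑ j, Real.sqrt (a j) * (Real.sqrt (a j) * v j)) ^ 2 ≤
      (∑ j, Real.sqrt (a j) ^ 2) * (∑ j, (Real.sqrt (a j) * v j) ^ 2) :=
    Finset.sum_mul_sq_le_sq_mul_sq Finset.univ _ _
  have e1 : ∀ j, Real.sqrt (a j) * (Real.sqrt (a j) * v j) = a j * v j := by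
    intro j; rw [← mul_assoc, Real.mul_self_sqrt (ha j)]
  have e2 : ∀ j, Real.sqrt (a j) ^ 2 = a j := fun j => Real.sq_sqrt (ha j)
  have e3 : ∀ j, (Real.sqrt (a j) * v j) ^ 2 = a j * v j ^ 2 := by
    intro j; rw [mul_pow, e2]
  simp only [e1, e2, e3] at key
  calc (∑ j, a j * v j) ^ 2 ≤ (∑ j, a j) * (∑ j, a j * v j ^ 2) := key
    _ ≤ 1 * (∑ j, a j * v j ^ 2) := by
        apply mul_le_mul_of_nonneg_right hs
        exact Finset.sum_nonneg fun j _ => mul_nonneg (ha j) (sq_nonneg _)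
    _ = _ := one_mul _

/-- for a nonnegative matrix `A` with no zero column and row sums
at most `1`, and `D = diag(colSums)`, the quadratic form of `Aᵀ A` is dominated
by that of `D`: `vᵀ Aᵀ A v ≤ vᵀ D v` for every `v`. -/
theorem lspia_quadratic_form_bound (S N : ℕ)
    (A : Matrix (Fin S) (Fin N) ℝ)
    (hnonneg : ∀ s j, 0 ≤ A s j)
    (hcol : ∀ j, ∃ s, A s j ≠ 0)
    (hrow : ∀ s, (∑ j, A s j) ≤ 1)
    (D : Matrix (Fin N) (Fin N) ℝ)
    (hD : D = Matrix.diagonal (fun j => ∑ s, A s j)) :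
    ∀ v : Fin N → ℝ, v ⬝ᵥ (Aᵀ * A).mulVec v ≤ v ⬝ᵥ D.mulVec v := by
  intro v
  have lhs : v ⬝ᵥ (Aᵀ * A).mulVec v = ∑ s, (∑ j, A s j * v j) ^ 2 := by
    rw [← mulVec_mulVec, dotProduct_mulVec, ← transpose_transpose A, vecMul_transpose,
      transpose_transpose]
    simp [dotProduct, mulVec, dotProduct, sq]
  have rhs : v ⬝ᵥ D.mulVec v = ∑ s, ∑ j, A s j * v j ^ 2 := by
    rw [hD, Finset.sum_comm]
    simp [dotProduct, mulVec_diagonal, Finset.sum_mul, sq]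
    exact Finset.sum_congr rfl fun s _ => by rw [Finset.mul_sum]; exact Finset.sum_congr rfl fun j _ => by ring
  rw [lhs, rhs]
  exact Finset.sum_le_sum fun s _ => row_cs N (A s) v (hnonneg s) (hrow s)
end
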